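/- Let Q be a real symmetric positive-definite 3×3 matrix and η = diag(−1,1,1). If v is a (complex) eigenvector of ηQ with eigenvalue λ, then λ is real and nonzero. Moreover there exists Λ ∈ O(2,1) (i.e., Λ η Λᵀ = η up to the sign convention, preserving the form associated with η) such that Λ Q Λᵀ is diagonal with positive diagonal entries. -/

import Mathlib

open Matrix

lemma herm_form_real {n : Type*} [Fintype n] (M : Matrix n n ℂ) (hM : M.IsHermitian)
    (v : n → ℂ) : (star v ⬝ᵥ M *ᵥ v).im = 0 := by
  have h : star (star v ⬝ᵥ M *ᵥ v) = star v ⬝ᵥ M *ᵥ v := by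
    conv_lhs => rw [star_dotProduct, star_star, star_mulVec, ← dotProduct_mulVec, hM.eq]
  exact Complex.conj_eq_iff_im.mp h

lemma re_form_eq (Q : Matrix (Fin 3) (Fin 3) ℝ) (v : Fin 3 → ℂ) :
    (star v ⬝ᵥ (Q.map (fun t : ℝ => (t : ℂ))) *ᵥ v).re =
      (fun i => (v i).re) ⬝ᵥ Q *ᵥ (fun i => (v i).re)
      + (fun i => (v i).im) ⬝ᵥ Q *ᵥ (fun i => (v i).im) := by
  simp [dotProduct, mulVec, Fin.sum_univ_three, Matrix.map_apply, Complex.mul_re,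
    Complex.add_re, Complex.add_im]
  ring

lemma re_form_pos (Q : Matrix (Fin 3) (Fin 3) ℝ) (hpos : Q.PosDef) (v : Fin 3 → ℂ)
    (hv : v ≠ 0) : 0 < (star v ⬝ᵥ (Q.map (fun t : ℝ => (t : ℂ))) *ᵥ v).re := by
  rw [re_form_eq]
  set xr : Fin 3 → ℝ := fun i => (v i).re with hxr
  set xi : Fin 3 → ℝ := fun i => (v i).im with hxi
  have hr : ∀ x : Fin 3 → ℝ, 0 ≤ x ⬝ᵥ Q *ᵥ x := by
    intro x
    simpa using hpos.posSemidef.dotProduct_mulVec_nonneg x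
  have hp : ∀ x : Fin 3 → ℝ, x ≠ 0 → 0 < x ⬝ᵥ Q *ᵥ x := by
    intro x hx
    simpa using hpos.dotProduct_mulVec_pos hx
  by_cases h : xr = 0
  · have hxine : xi ≠ 0 := by
      intro h2
      apply hv
      funext i
      have h1 : (v i).re = 0 := congrFun h i
      have h2' : (v i).im = 0 := congrFun h2 i
      exact Complex.ext h1 h2'
    have := hp xi hxine
    have := hr xr
    linarith
  · have := hp xr h
    have := hr xi
    linarith

lemma part1 (Q : Matrix (Fin 3) (Fin 3) ℝ) (hsymm : Q.IsSymm) (hpos : Q.PosDef)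
    (v : Fin 3 → ℂ) (lam : ℂ) (hv : v ≠ 0)
    (heq : ((Matrix.diagonal ![(-1 : ℝ), 1, 1] * Q).map (fun t : ℝ => (t : ℂ))).mulVec v
          = lam • v) : lam.im = 0 ∧ lam ≠ 0 := by
  set η : Matrix (Fin 3) (Fin 3) ℝ := Matrix.diagonal ![(-1 : ℝ), 1, 1] with hη
  set c : ℝ →+* ℂ := Complex.ofRealHom with hc
  have hmap : (η * Q).map (fun t : ℝ => (t : ℂ)) = η.map (fun t : ℝ => (t : ℂ)) * Q.map (fun t : ℝ => (t : ℂ)) := by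
    exact Matrix.map_mul (f := c)
  set ηc := η.map (fun t : ℝ => (t : ℂ)) with hηc
  set Qc := Q.map (fun t : ℝ => (t : ℂ)) with hQc
  have hη2 : ηc * ηc = 1 := by
    rw [hηc, hη]
    ext i j
    fin_cases i <;> fin_cases j <;>
      simp [Matrix.mul_apply, Matrix.map_apply, Fin.sum_univ_three, Matrix.diagonal,
        Matrix.one_apply]
  have heq2 : Qc *ᵥ v = lam • (ηc *ᵥ v) := by
    have h1 : (ηc * (ηc * Qc)) *ᵥ v = ηc *ᵥ (lam • v) := by
      rw [← mulVec_mulVec, ← hmap, heq]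
    rw [← mul_assoc, hη2, one_mul] at h1
    rw [h1, mulVec_smul]
  set a := star v ⬝ᵥ Qc *ᵥ v with ha
  set b := star v ⬝ᵥ ηc *ᵥ v with hb
  have hab : a = lam * b := by
    rw [ha, heq2, dotProduct_smul, hb, smul_eq_mul]
  have haim : a.im = 0 := by
    apply herm_form_real
    rw [hQc]
    unfold Matrix.IsHermitian
    ext i j
    simp only [conjTranspose_apply, Matrix.map_apply, Complex.star_def, Complex.conj_ofReal]
    rw [show Q j i = Q i j from by rw [← Matrix.IsSymm.apply hsymm i j]]
  have hbim : b.im = 0 := by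
    apply herm_form_real
    rw [hηc, hη]
    unfold Matrix.IsHermitian
    ext i j
    simp only [conjTranspose_apply, Matrix.map_apply, Complex.star_def, Complex.conj_ofReal]
    rw [Matrix.diagonal_apply, Matrix.diagonal_apply]
    aesop
  have hare : 0 < a.re := by
    rw [ha, hQc]
    exact re_form_pos Q hpos v hv
  have ha0 : a ≠ 0 := fun h => by simp [h] at hare
  have hb0 : b ≠ 0 := by
    intro h
    rw [h, mul_zero] at hab
    exact ha0 hab
  have hbre : b.re ≠ 0 := by
    intro h
    exact hb0 (Complex.ext h hbim)
  have hlam : lam ≠ 0 := by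
    intro h
    rw [h, zero_mul] at hab
    exact ha0 hab
  refine ⟨?_, hlam⟩
  have him : a.im = lam.re * b.im + lam.im * b.re := by
    rw [hab, Complex.mul_im]
  rw [haim, hbim, mul_zero, zero_add] at him
  exact (mul_eq_zero.mp him.symm).resolve_right hbre

lemma sqrt_abs_mul (t : ℝ) : Real.sqrt |t| * ((t:ℝ)⁻¹ * Real.sqrt |t|) = |t| * t⁻¹ := by
  rw [show Real.sqrt |t| * (t⁻¹ * Real.sqrt |t|) = (Real.sqrt |t| * Real.sqrt |t|) * t⁻¹ by ring,
    Real.mul_self_sqrt (abs_nonneg t)]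

open scoped MatrixOrder in
lemma part2 (Q : Matrix (Fin 3) (Fin 3) ℝ) (hsymm : Q.IsSymm) (hpos : Q.PosDef) :
    ∃ Λ : Matrix (Fin 3) (Fin 3) ℝ,
      Λᵀ * Matrix.diagonal ![(-1 : ℝ), 1, 1] * Λ = Matrix.diagonal ![(-1 : ℝ), 1, 1] ∧
      ∃ d : Fin 3 → ℝ, (∀ i, 0 < d i) ∧ Λ * Q * Λᵀ = Matrix.diagonal d := by
  set η : Matrix (Fin 3) (Fin 3) ℝ := Matrix.diagonal ![(-1 : ℝ), 1, 1] with hη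
  have hη2 : η * η = 1 := by
    ext i j
    rw [hη]
    fin_cases i <;> fin_cases j <;>
      simp [Matrix.mul_apply, Fin.sum_univ_three, Matrix.diagonal, Matrix.one_apply]
  have hηt : ηᵀ = η := Matrix.diagonal_transpose _
  have hps := hpos.posSemidef
  set R := CFC.sqrt Q with hRdef
  have hRR : R * R = Q := CFC.sqrt_mul_sqrt_self Q hps.nonneg
  have hRherm : R.IsHermitian := (CFC.sqrt_nonneg Q).posSemidef.1
  have hRt : Rᵀ = R := by
    rw [← Matrix.conjTranspose_eq_transpose_of_trivial]; exact hRherm.eq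
  have hdetR : R.det ≠ 0 := by
    intro h
    have : Q.det = 0 := by rw [← hRR, det_mul, h, zero_mul]
    exact hpos.det_pos.ne' this
  have hRu : IsUnit R.det := hdetR.isUnit
  have hRinv : R⁻¹ * R = 1 := Matrix.nonsing_inv_mul R hRu
  have hRinv' : R * R⁻¹ = 1 := Matrix.mul_nonsing_inv R hRu
  have hRinvT : R⁻¹ᵀ = R⁻¹ := by rw [Matrix.transpose_nonsing_inv, hRt]
  set A := R * η * R with hAdef
  have hAt : Aᵀ = A := by
    rw [hAdef, transpose_mul, transpose_mul, hηt, hRt, ← mul_assoc]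
  have hAherm : A.IsHermitian := by
    show Aᴴ = A
    rw [Matrix.conjTranspose_eq_transpose_of_trivial, hAt]
  set ev := hAherm.eigenvalues with hev
  set U : Matrix (Fin 3) (Fin 3) ℝ := (hAherm.eigenvectorUnitary : Matrix (Fin 3) (Fin 3) ℝ)
    with hU
  have hstar : star U = Uᵀ := by
    rw [Matrix.star_eq_conjTranspose, Matrix.conjTranspose_eq_transpose_of_trivial]
  have hU2 : U * Uᵀ = 1 := by
    rw [← hstar]; exact Matrix.mem_unitaryGroup_iff.mp hAherm.eigenvectorUnitary.2
  have hU1 : Uᵀ * U = 1 := mul_eq_one_comm.mp hU2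
  have hsp : Uᵀ * A * U = diagonal ev := by
    have h : star U * A * U = diagonal (RCLike.ofReal ∘ hAherm.eigenvalues) := by
      simpa only [Unitary.conjStarAlgAut_apply, Unitary.coe_star, star_star] using
        hAherm.conjStarAlgAut_star_eigenvectorUnitary
    rw [hstar] at h
    rw [h, hev]
    congr 1
  -- determinant facts
  have hdetη : η.det = -1 := by
    rw [hη, det_diagonal, Fin.prod_univ_three]
    norm_num
    rfl
  have hdetA : A.det < 0 := by
    rw [hAdef, det_mul, det_mul, hdetη]
    nlinarith [mul_self_pos.mpr hdetR]
  have hprodev : ev 0 * ev 1 * ev 2 < 0 := by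
    have h := hAherm.det_eq_prod_eigenvalues
    rw [Fin.prod_univ_three] at h
    have h' : A.det = ev 0 * ev 1 * ev 2 := by
      simpa using h
    linarith [hdetA, h'.symm.le]
  -- positivity witness vector
  set e₀ : Fin 3 → ℝ := ![0, 1, 0] with he₀
  set x₀ : Fin 3 → ℝ := R⁻¹ *ᵥ e₀ with hx₀
  have hx₀val : x₀ ⬝ᵥ A *ᵥ x₀ = 1 := by
    have h1 : A * R⁻¹ = R * η := by
      rw [hAdef, mul_assoc (R * η) R R⁻¹, hRinv', mul_one]
    calc x₀ ⬝ᵥ A *ᵥ x₀ = (R⁻¹ *ᵥ e₀) ⬝ᵥ (R * η) *ᵥ e₀ := by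
          rw [hx₀, mulVec_mulVec, h1]
      _ = (e₀ ᵥ* R⁻¹) ⬝ᵥ (R * η) *ᵥ e₀ := by rw [← mulVec_transpose, hRinvT]
      _ = e₀ ⬝ᵥ (R⁻¹ * (R * η)) *ᵥ e₀ := by rw [← dotProduct_mulVec, mulVec_mulVec]
      _ = e₀ ⬝ᵥ η *ᵥ e₀ := by rw [← mul_assoc, hRinv, one_mul]
      _ = 1 := by
          rw [he₀, hη]
          simp [dotProduct, mulVec, Fin.sum_univ_three, Matrix.diagonal]
  have hnotall : ¬ (∀ i, ev i < 0) := by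
    intro hall
    set y : Fin 3 → ℝ := Uᵀ *ᵥ x₀ with hy
    have hAspec : A = U * diagonal ev * Uᵀ := by
      calc A = (U * Uᵀ) * A * (U * Uᵀ) := by rw [hU2, one_mul, mul_one]
        _ = U * (Uᵀ * A * U) * Uᵀ := by simp only [mul_assoc]
        _ = U * diagonal ev * Uᵀ := by rw [hsp]
    have hval : x₀ ⬝ᵥ A *ᵥ x₀ = y ⬝ᵥ (diagonal ev) *ᵥ y := by
      rw [hAspec, ← mulVec_mulVec, ← mulVec_mulVec, dotProduct_mulVec, ← mulVec_transpose, ← hy]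
    have hsum : y ⬝ᵥ (diagonal ev) *ᵥ y
        = ev 0 * (y 0 * y 0) + ev 1 * (y 1 * y 1) + ev 2 * (y 2 * y 2) := by
      simp [dotProduct, mulVec, Fin.sum_univ_three, Matrix.diagonal]
      ring
    have h1 := hall 0
    have h2 := hall 1
    have h3 := hall 2
    nlinarith [sq_nonneg (y 0), sq_nonneg (y 1), sq_nonneg (y 2), hx₀val, hval, hsum]
  have hevne : (ev 0 ≠ 0) ∧ (ev 1 ≠ 0) ∧ (ev 2 ≠ 0) := by
    refine ⟨?_, ?_, ?_⟩ <;> intro h <;> rw [h] at hprodev <;> simp at hprodev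
  have hsigns : ∃ σ : Equiv.Perm (Fin 3), ev (σ 0) < 0 ∧ 0 < ev (σ 1) ∧ 0 < ev (σ 2) := by
    obtain ⟨h0, h1, h2⟩ := hevne
    rcases h0.lt_or_gt with h0n | h0p <;> rcases h1.lt_or_gt with h1n | h1p <;>
      rcases h2.lt_or_gt with h2n | h2p
    · exact absurd (fun i => by fin_cases i <;> assumption) hnotall
    · exact absurd hprodev (not_lt.mpr (mul_pos (mul_pos_of_neg_of_neg h0n h1n) h2p).le)
    · exact absurd hprodev
        (not_lt.mpr (mul_pos_of_neg_of_neg (mul_neg_of_neg_of_pos h0n h1p) h2n).le)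
    · exact ⟨Equiv.refl _, by simpa using h0n, by simpa using h1p, by simpa using h2p⟩
    · exact absurd hprodev
        (not_lt.mpr (mul_pos_of_neg_of_neg (mul_neg_of_pos_of_neg h0p h1n) h2n).le)
    · refine ⟨Equiv.swap 0 1, ?_, ?_, ?_⟩ <;> simp [Equiv.swap_apply_def] <;> assumption
    · refine ⟨Equiv.swap 0 2, ?_, ?_, ?_⟩ <;> simp [Equiv.swap_apply_def] <;> assumption
    · exact absurd hprodev (not_lt.mpr (mul_pos (mul_pos h0p h1p) h2p).le)
  obtain ⟨σ, hσ0, hσ1, hσ2⟩ := hsigns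
  set d' : Fin 3 → ℝ := fun i => ev (σ i) with hd'
  have hd'0 : d' 0 < 0 := hσ0
  have hd'1 : 0 < d' 1 := hσ1
  have hd'2 : 0 < d' 2 := hσ2
  have hd'ne : ∀ i, d' i ≠ 0 := by
    intro i
    fin_cases i
    · exact ne_of_lt hd'0
    · exact ne_of_gt hd'1
    · exact ne_of_gt hd'2
  set V : Matrix (Fin 3) (Fin 3) ℝ := U.submatrix id ⇑σ with hV
  have hVt : Vᵀ = Uᵀ.submatrix ⇑σ id := by rw [hV, transpose_submatrix]
  have hV1 : Vᵀ * V = 1 := by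
    rw [hVt, hV]
    have h := Matrix.submatrix_mul_equiv Uᵀ U ⇑σ (Equiv.refl (Fin 3)) ⇑σ
    simp only [Equiv.coe_refl] at h
    rw [h, hU1]
    simp
  have hV2 : V * Vᵀ = 1 := mul_eq_one_comm.mp hV1
  have hVAV : Vᵀ * A * V = diagonal d' := by
    have h1 : A * V = (A * U).submatrix id ⇑σ := by
      ext i j
      simp [hV, Matrix.mul_apply, Matrix.submatrix_apply]
    have h2 := Matrix.submatrix_mul_equiv Uᵀ (A * U) ⇑σ (Equiv.refl (Fin 3)) ⇑σ
    simp only [Equiv.coe_refl] at h2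
    rw [mul_assoc, h1, hVt, h2, ← mul_assoc, hsp, Matrix.submatrix_diagonal_equiv]
    rfl
  have hcancel : ∀ X : Matrix (Fin 3) (Fin 3) ℝ, Vᵀ * (V * X) = X := by
    intro X; rw [← mul_assoc, hV1, one_mul]
  have hAspec' : A = V * diagonal d' * Vᵀ := by
    calc A = (V * Vᵀ) * A * (V * Vᵀ) := by rw [hV2, one_mul, mul_one]
      _ = V * (Vᵀ * A * V) * Vᵀ := by simp only [mul_assoc]
      _ = V * diagonal d' * Vᵀ := by rw [hVAV]
  have hdd : diagonal d' * diagonal (fun i => (d' i)⁻¹) = 1 := by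
    rw [diagonal_mul_diagonal, ← Matrix.diagonal_one]
    exact congrArg Matrix.diagonal (funext fun i => mul_inv_cancel₀ (hd'ne i))
  have hAinv : A⁻¹ = V * diagonal (fun i => (d' i)⁻¹) * Vᵀ := by
    apply Matrix.inv_eq_right_inv
    rw [hAspec']
    calc V * diagonal d' * Vᵀ * (V * diagonal (fun i => (d' i)⁻¹) * Vᵀ)
        = V * (diagonal d' * (Vᵀ * (V * (diagonal (fun i => (d' i)⁻¹) * Vᵀ)))) := by
          simp only [mul_assoc]
      _ = V * (diagonal d' * (diagonal (fun i => (d' i)⁻¹) * Vᵀ)) := by rw [hcancel]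
      _ = V * ((diagonal d' * diagonal (fun i => (d' i)⁻¹)) * Vᵀ) := by
          simp only [mul_assoc]
      _ = V * (1 * Vᵀ) := by rw [hdd]
      _ = 1 := by rw [one_mul, hV2]
  have hRinvηRinv : R⁻¹ * η * R⁻¹ = A⁻¹ := by
    have hηinv : η⁻¹ = η := Matrix.inv_eq_right_inv hη2
    rw [hAdef, Matrix.mul_inv_rev, Matrix.mul_inv_rev, hηinv, ← mul_assoc]
  set w : Fin 3 → ℝ := fun i => Real.sqrt |d' i| with hw
  set E : Matrix (Fin 3) (Fin 3) ℝ := diagonal w with hE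
  have hEt : Eᵀ = E := by rw [hE, diagonal_transpose]
  set Λ : Matrix (Fin 3) (Fin 3) ℝ := E * Vᵀ * R⁻¹ with hΛ
  have hΛt : Λᵀ = R⁻¹ * (V * E) := by
    rw [hΛ, transpose_mul, transpose_mul, hRinvT, transpose_transpose, hEt]
  have hkey1 : R⁻¹ * Q * R⁻¹ = 1 := by
    rw [← hRR, ← mul_assoc, hRinv, one_mul, hRinv']
  have hQd : Λ * Q * Λᵀ = diagonal (fun i => |d' i|) := by
    rw [hΛt, hΛ]
    calc E * Vᵀ * R⁻¹ * Q * (R⁻¹ * (V * E))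
        = E * Vᵀ * (R⁻¹ * Q * R⁻¹) * (V * E) := by simp only [mul_assoc]
      _ = E * Vᵀ * (V * E) := by rw [hkey1, mul_one]
      _ = E * (Vᵀ * (V * E)) := by simp only [mul_assoc]
      _ = E * E := by rw [hcancel]
      _ = diagonal (fun i => |d' i|) := by
          rw [hE, diagonal_mul_diagonal]
          exact congrArg Matrix.diagonal
            (funext fun i => Real.mul_self_sqrt (abs_nonneg _))
  have hΛη : Λ * η * Λᵀ = η := by
    rw [hΛ, hΛt]
    calc E * Vᵀ * R⁻¹ * η * (R⁻¹ * (V * E))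
        = E * Vᵀ * (R⁻¹ * η * R⁻¹) * (V * E) := by simp only [mul_assoc]
      _ = E * Vᵀ * (V * diagonal (fun i => (d' i)⁻¹) * Vᵀ) * (V * E) := by
          rw [hRinvηRinv, hAinv]
      _ = E * (diagonal (fun i => (d' i)⁻¹) * E) := by
          simp only [mul_assoc]
          rw [hcancel, hcancel]
      _ = diagonal (fun i => w i * ((d' i)⁻¹ * w i)) := by
          rw [hE, diagonal_mul_diagonal, diagonal_mul_diagonal]
      _ = η := by
          rw [hη]
          refine congrArg Matrix.diagonal (funext fun i => ?_)
          rw [hw]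
          simp only []
          rw [sqrt_abs_mul]
          fin_cases i
          · show |d' 0| * (d' 0)⁻¹ = (-1 : ℝ)
            rw [abs_of_neg hd'0, neg_mul, mul_inv_cancel₀ (hd'ne 0)]
          · show |d' 1| * (d' 1)⁻¹ = (1 : ℝ)
            rw [abs_of_pos hd'1, mul_inv_cancel₀ (hd'ne 1)]
          · show |d' 2| * (d' 2)⁻¹ = (1 : ℝ)
            rw [abs_of_pos hd'2, mul_inv_cancel₀ (hd'ne 2)]
  have hone : Λ * (η * Λᵀ * η) = 1 := by
    calc Λ * (η * Λᵀ * η) = (Λ * η * Λᵀ) * η := by simp only [mul_assoc]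
      _ = η * η := by rw [hΛη]
      _ = 1 := hη2
  have htwo : (η * Λᵀ * η) * Λ = 1 := mul_eq_one_comm.mp hone
  have hfinal : Λᵀ * η * Λ = η := by
    calc Λᵀ * η * Λ = η * (η * (Λᵀ * (η * Λ))) := by
          rw [show η * (η * (Λᵀ * (η * Λ))) = (η * η) * (Λᵀ * η * Λ) by
            simp only [mul_assoc], hη2, one_mul]
      _ = η * ((η * Λᵀ * η) * Λ) := by simp only [mul_assoc]
      _ = η * 1 := by rw [htwo]
      _ = η := mul_one η
  exact ⟨Λ, hfinal, fun i => |d' i|, fun i => abs_pos.mpr (hd'ne i), hQd⟩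

/-- Let `Q` be a real symmetric positive-definite 3×3 matrix and
`η = diag(−1,1,1)`. Every (complex) eigenvalue of `ηQ` is real and nonzero, and
there exists `Λ ∈ O(2,1)` (i.e. `Λᵀ η Λ = η`) such that `Λ Q Λᵀ` is diagonal with
positive diagonal entries. -/
theorem lorentz_diagonalization_of_posdef
    (Q : Matrix (Fin 3) (Fin 3) ℝ) (hsymm : Q.IsSymm) (hpos : Q.PosDef) :
    (∀ (v : Fin 3 → ℂ) (lam : ℂ), v ≠ 0 →
      ((Matrix.diagonal ![(-1 : ℝ), 1, 1] * Q).map (fun t : ℝ => (t : ℂ))).mulVec v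
          = lam • v →
      lam.im = 0 ∧ lam ≠ 0) ∧
    (∃ Λ : Matrix (Fin 3) (Fin 3) ℝ,
      Λᵀ * Matrix.diagonal ![(-1 : ℝ), 1, 1] * Λ = Matrix.diagonal ![(-1 : ℝ), 1, 1] ∧
      ∃ d : Fin 3 → ℝ, (∀ i, 0 < d i) ∧ Λ * Q * Λᵀ = Matrix.diagonal d) := by
  exact ⟨fun v lam hv heq => part1 Q hsymm hpos v lam hv heq, part2 Q hsymm hpos⟩
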